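/- arXiv:2110.14045 — 3 statements merged into one kernel-verified Lean document; each statement's English description precedes it below -/
import Mathlib

section
/- Let k ≥ 1 and let a : Fin (2k) → ℕ with a i > 0 for all i. In R = MvPolynomial (Fin 2) ℤ write x = X 0 and y = X 1, let ι = Fin (2k) ⊕ Fin 2, and define v : ι → R by v (inl i) = (a i) · x and v (inr j) = y for both j. Suppose π is a finite partition of ι into nonempty blocks and B₀ ∈ π satisfies ∏_{j ∈ B₀} v j = ∑_{B ∈ π, B ≠ B₀} ∏_{j ∈ B} v j. Then π has exactly two blocks, each of the two blocks contains exactly one of the two indices inr 0, inr 1, and each block contains exactly k of the indices inl i. -/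
/-!
Every block `B` multiplies out to a single monomial `c_B · x^{#(B ∩ inl)} · y^{#(B ∩ inr)}`
with `c_B > 0`. Since the coefficients on the right-hand side are positive, nothing cancels, so
every block has the same exponent as `B₀`. The partition has at least two blocks (the product
over `B₀` is nonzero), and the blocks share the two copies of `y` equally, so there are exactly
two blocks, each with one `y` and `k` of the `a_i · x`.
-/

open Finset

namespace Finpartition

variable {α β : Type*} [DecidableEq α] [DecidableEq β] {u : Finset (α ⊕ β)}

theorem sum_card_toLeft (P : Finpartition u) : ∑ B ∈ P.parts, #B.toLeft = #u.toLeft := by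
  rw [← card_biUnion]
  · congr 1
    ext i
    simp [← P.biUnion_parts]
  · intro B hB B' hB' hne
    exact disjoint_left.2 fun i hi hi' =>
      disjoint_left.1 (P.disjoint hB hB' hne) (mem_toLeft.1 hi) (mem_toLeft.1 hi')

theorem sum_card_toRight (P : Finpartition u) : ∑ B ∈ P.parts, #B.toRight = #u.toRight := by
  rw [← card_biUnion]
  · congr 1
    ext j
    simp [← P.biUnion_parts]
  · intro B hB B' hB' hne
    exact disjoint_left.2 fun j hj hj' =>
      disjoint_left.1 (P.disjoint hB hB' hne) (mem_toRight.1 hj) (mem_toRight.1 hj')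

end Finpartition

namespace MvPolynomial

theorem prod_eq_monomial_card_toLeft_card_toRight {R σ α β : Type*} [CommSemiring R]
    {v : α ⊕ β → MvPolynomial σ R} {c : α → R} {p q : σ}
    (hl : ∀ i, v (Sum.inl i) = C (c i) * X p) (hr : ∀ j, v (Sum.inr j) = X q)
    (B : Finset (α ⊕ β)) :
    ∏ j ∈ B, v j =
      monomial (Finsupp.single p #B.toLeft + Finsupp.single q #B.toRight) (∏ i ∈ B.toLeft, c i) := by
  classical
  conv_lhs => rw [← toLeft_disjSum_toRight (u := B)]
  rw [prod_disjSum]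
  simp only [hl, hr, prod_mul_distrib, prod_const, ← map_prod, X_pow_eq_monomial, C_mul_monomial,
    monomial_mul, mul_one]

theorem eq_of_monomial_eq_sum_monomial {R σ ι : Type*} [CommSemiring R] [PartialOrder R]
    [IsOrderedAddMonoid R] {s : Finset ι} {d : σ →₀ ℕ} {r : R} {e : ι → σ →₀ ℕ} {c : ι → R}
    (hc : ∀ i ∈ s, 0 < c i) (h : monomial d r = ∑ i ∈ s, monomial (e i) (c i))
    {i : ι} (hi : i ∈ s) : e i = d := by
  classical
  have hcoeff := congrArg (coeff (e i)) h
  simp only [coeff_sum, coeff_monomial] at hcoeff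
  have hpos : 0 < ∑ j ∈ s, if e j = e i then c j else 0 :=
    (hc i hi).trans_le <| by
      simpa using single_le_sum (f := fun j => if e j = e i then c j else 0)
        (fun j hj => by split_ifs <;> simp [(hc j hj).le]) hi
  by_contra hne
  rw [← hcoeff, if_neg (Ne.symm hne)] at hpos
  exact hpos.false

end MvPolynomial

theorem stmt_5_general (k : ℕ) (a : Fin (2 * k) → ℕ) (ha : ∀ i, 0 < a i)
    (v : Fin (2 * k) ⊕ Fin 2 → MvPolynomial (Fin 2) ℤ)
    (hv1 : ∀ i, v (Sum.inl i) = (a i : MvPolynomial (Fin 2) ℤ) * MvPolynomial.X 0)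
    (hv2 : ∀ j, v (Sum.inr j) = MvPolynomial.X 1)
    (π : Finpartition (Finset.univ : Finset (Fin (2 * k) ⊕ Fin 2)))
    (B₀ : Finset (Fin (2 * k) ⊕ Fin 2)) (hB₀ : B₀ ∈ π.parts)
    (h : ∏ j ∈ B₀, v j = ∑ B ∈ π.parts.erase B₀, ∏ j ∈ B, v j) :
    π.parts.card = 2 ∧
    (∃ B₁ ∈ π.parts, ∃ B₂ ∈ π.parts, B₁ ≠ B₂ ∧
      Sum.inr 0 ∈ B₁ ∧ Sum.inr 1 ∈ B₂) ∧
    (∀ B ∈ π.parts, (Finset.univ.filter (fun i : Fin (2 * k) => Sum.inl i ∈ B)).card = k) := by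
  classical
  have hc : ∀ B : Finset (Fin (2 * k) ⊕ Fin 2), 0 < ∏ i ∈ B.toLeft, (a i : ℤ) :=
    fun B => prod_pos fun i _ => by exact_mod_cast ha i
  simp only [MvPolynomial.prod_eq_monomial_card_toLeft_card_toRight (c := fun i => (a i : ℤ))
    (fun i => by rw [hv1, map_natCast]) hv2] at h
  have hsame : ∀ B ∈ π.parts, #B.toLeft = #B₀.toLeft ∧ #B.toRight = #B₀.toRight := by
    intro B hB
    rcases eq_or_ne B B₀ with rfl | hne
    · exact ⟨rfl, rfl⟩
    have he := MvPolynomial.eq_of_monomial_eq_sum_monomial (fun B _ => hc B) h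
      (mem_erase.2 ⟨hne, hB⟩)
    exact ⟨by simpa using congrArg (· 0) he, by simpa using congrArg (· 1) he⟩
  have htwo : 2 ≤ #π.parts := by
    obtain ⟨B, hB⟩ : (π.parts.erase B₀).Nonempty := by
      rw [nonempty_iff_ne_empty]
      intro hempty
      rw [hempty, sum_empty, MvPolynomial.monomial_eq_zero] at h
      exact (hc B₀).ne' h
    exact one_lt_card.2 ⟨B₀, hB₀, B, mem_of_mem_erase hB, (ne_of_mem_erase hB).symm⟩
  have hL : #π.parts * #B₀.toLeft = 2 * k := by
    simpa [sum_congr rfl fun B hB => (hsame B hB).1] using π.sum_card_toLeft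
  have hR : #π.parts * #B₀.toRight = 2 := by
    simpa [sum_congr rfl fun B hB => (hsame B hB).2] using π.sum_card_toRight
  have hcard : #π.parts = 2 := le_antisymm (Nat.le_of_dvd two_pos ⟨_, hR.symm⟩) htwo
  rw [hcard] at hL hR
  refine ⟨hcard, ?_, fun B hB => ?_⟩
  · obtain ⟨B₁, hB₁, h0⟩ := π.exists_mem (mem_univ (Sum.inr 0))
    obtain ⟨B₂, hB₂, h1⟩ := π.exists_mem (mem_univ (Sum.inr 1))
    refine ⟨B₁, hB₁, B₂, hB₂, ?_, h0, h1⟩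
    rintro rfl
    have : 1 < #B₁.toRight :=
      one_lt_card.2 ⟨0, mem_toRight.2 h0, 1, mem_toRight.2 h1, zero_ne_one⟩
    have := (hsame B₁ hB₁).2
    omega
  · have : univ.filter (fun i : Fin (2 * k) => Sum.inl i ∈ B) = B.toLeft := by
      ext i
      simp
    rw [this, (hsame B hB).1]
    omega

theorem stmt_5 (k : ℕ) (hk : 1 ≤ k) (a : Fin (2 * k) → ℕ) (ha : ∀ i, 0 < a i)
    (v : Fin (2 * k) ⊕ Fin 2 → MvPolynomial (Fin 2) ℤ)
    (hv1 : ∀ i, v (Sum.inl i) = (a i : MvPolynomial (Fin 2) ℤ) * MvPolynomial.X 0)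
    (hv2 : ∀ j, v (Sum.inr j) = MvPolynomial.X 1)
    (π : Finpartition (Finset.univ : Finset (Fin (2 * k) ⊕ Fin 2)))
    (B₀ : Finset (Fin (2 * k) ⊕ Fin 2)) (hB₀ : B₀ ∈ π.parts)
    (h : ∏ j ∈ B₀, v j = ∑ B ∈ π.parts.erase B₀, ∏ j ∈ B, v j) :
    π.parts.card = 2 ∧
    (∃ B₁ ∈ π.parts, ∃ B₂ ∈ π.parts, B₁ ≠ B₂ ∧
      Sum.inr 0 ∈ B₁ ∧ Sum.inr 1 ∈ B₂) ∧
    (∀ B ∈ π.parts, (Finset.univ.filter (fun i : Fin (2 * k) => Sum.inl i ∈ B)).card = k) :=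
  stmt_5_general k a ha v hv1 hv2 π B₀ hB₀ h
end

section
/- Let k ≥ 1, let a : Fin (2k) → ℕ with a i > 0 for all i, and let m : ℕ satisfy ∏_i a i = m². In the field RatFunc ℚ, let ι = Fin (2k) ⊕ Fin 2 and define v : ι → RatFunc ℚ by v (inl i) = (a i) · X, v (inr 0) = X^{4k}, and v (inr 1) = X^{2k}. Then the following are equivalent: (1) there exist a finite partition π of ι into nonempty blocks, for each block B a nonempty numerator set N(B) ⊆ B, and a single distinguished block B₀ ∈ π, such that (∏_{j ∈ N(B₀)} v j)/(∏_{j ∈ B₀ \ N(B₀)} v j) − ∑_{B ∈ π, B ≠ B₀} (∏_{j ∈ N(B)} v j)/(∏_{j ∈ B \ N(B)} v j) = m · X^{5k} − m · X^{3k}; (2) there exists S : Finset (Fin (2k)) with S.card = k and ∏_{i ∈ S} a i = m. -/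
/-!
Every value is a positive rational times a power of `X`, so every block contributes a monomial
`c_B X^{e_B}` with `c_B > 0` and `e_B` the degree of its numerator minus that of its denominator.
Comparing coefficients (after clearing denominators with `X^{8k}`), the leading block has exponent
`5k`, every other block has exponent `5k` or `3k`, and some block has exponent `3k`. As the degrees
of all values add up to `8k = 5k + 3k`, there are exactly two blocks, neither with a denominator.
The leading block then has degree `5k`, which forces it to consist of `X^{4k}` and exactly `k` of
the values `a_i X`, whose product is the coefficient `m` of `X^{5k}`.

Conversely, `S` and its complement (whose product is `m² / m = m`), joined with `X^{4k}` and
`X^{2k}` respectively, give `m X^{5k} - m X^{3k}`.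
-/

open Finset

section MonomialIdentity

open Polynomial

lemma coeff_monomial_sub_sum_eq {R β : Type*} [CommRing R] {s : Finset β} {r : β → R}
    {e : β → ℕ} {r₀ m : R} {e₀ p q : ℕ}
    (h : C r₀ * X ^ e₀ - ∑ b ∈ s, C (r b) * X ^ e b = C m * X ^ p - C m * X ^ q) (n : ℕ) :
    (if n = e₀ then r₀ else 0) - ∑ b ∈ s, (if n = e b then r b else 0) =
      (if n = p then m else 0) - (if n = q then m else 0) := by
  simpa only [coeff_sub, finsetSum_coeff, coeff_C_mul, coeff_X_pow, mul_ite, mul_one, mul_zero]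
    using congrArg (coeff · n) h

lemma exponents_of_monomial_sub_sum_eq {R β : Type*} [CommRing R] [LinearOrder R]
    [IsStrictOrderedRing R] {s : Finset β} {r : β → R} {e : β → ℕ} {r₀ m : R} {e₀ p q : ℕ}
    (hr : ∀ b ∈ s, 0 < r b) (hm : 0 < m) (hpq : p ≠ q)
    (h : C r₀ * X ^ e₀ - ∑ b ∈ s, C (r b) * X ^ e b = C m * X ^ p - C m * X ^ q) :
    e₀ = p ∧ (∀ b ∈ s, e b = p ∨ e b = q) ∧ ∃ b ∈ s, e b = q := by
  have hcoeff := coeff_monomial_sub_sum_eq h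
  have hterm_nonneg (n : ℕ) (b : β) (hb : b ∈ s) : 0 ≤ if n = e b then r b else 0 := by
    split_ifs
    exacts [(hr b hb).le, le_rfl]
  have he₀ : e₀ = p := by
    by_contra hne
    have hp := hcoeff p
    rw [if_neg (Ne.symm hne), if_pos rfl, if_neg hpq] at hp
    linarith [sum_nonneg (hterm_nonneg p)]
  refine ⟨he₀, fun b hb => ?_, ?_⟩
  · by_contra! hb'
    have hcoeff_b := hcoeff (e b)
    rw [he₀, if_neg hb'.1, if_neg hb'.1, if_neg hb'.2] at hcoeff_b
    have hle := single_le_sum (hterm_nonneg (e b)) hb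
    simp only [if_true] at hle
    linarith [hr b hb]
  · by_contra! hno
    have hq := hcoeff q
    rw [he₀, if_neg hpq.symm, if_neg hpq.symm, if_pos rfl,
      sum_eq_zero fun b hb => if_neg (hno b hb).symm] at hq
    linarith

end MonomialIdentity

lemma RatFunc.X_pow_mul_C_mul_X_pow_div {K : Type*} [Field K] {a b : K} {n p q : ℕ}
    (hb : b ≠ 0) (hq : q ≤ n) :
    X ^ n * (C a * X ^ p / (C b * X ^ q)) =
      algebraMap (Polynomial K) (RatFunc K)
        (Polynomial.C (a / b) * Polynomial.X ^ (n - q + p)) := by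
  have hX : (X : RatFunc K) ≠ 0 := X_ne_zero
  have hCb : C b ≠ 0 := by simpa using hb
  rw [map_mul, algebraMap_C, map_pow, algebraMap_X, map_div₀, ← Nat.sub_add_cancel hq, pow_add,
    Nat.add_sub_cancel, pow_add]
  field_simp

lemma RatFunc.prod_C_mul_X_pow {K ι : Type*} [Field K] (c : ι → K) (d : ι → ℕ) (s : Finset ι) :
    ∏ j ∈ s, C (c j) * X ^ d j = C (∏ j ∈ s, c j) * X ^ ∑ j ∈ s, d j := by
  rw [prod_mul_distrib, map_prod, prod_pow_eq_pow_sum]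

lemma Finpartition.sum_sum_parts {ι M : Type*} [DecidableEq ι] [AddCommMonoid M] {s : Finset ι}
    (π : Finpartition s) (f : ι → M) : ∑ B ∈ π.parts, ∑ j ∈ B, f j = ∑ j ∈ s, f j := by
  conv_rhs => rw [← π.biUnion_parts]
  exact (sum_biUnion π.supIndep.pairwiseDisjoint).symm

lemma Finpartition.parts_erase_eq_singleton {ι : Type*} [Fintype ι] [DecidableEq ι]
    (π : Finpartition (univ : Finset ι)) (w : ι → ℕ) {N : Finset ι → Finset ι}
    (hN : ∀ B ∈ π.parts, N B ⊆ B) {α β : ℕ} (hβ : 0 < β) (htotal : ∑ j, w j = α + β)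
    {B₀ B₁ : Finset ι} (hB₀ : B₀ ∈ π.parts) (hB₁ : B₁ ∈ π.parts.erase B₀)
    (h₀ : α + ∑ j ∈ B₀ \ N B₀, w j ≤ ∑ j ∈ N B₀, w j)
    (hrest : ∀ B ∈ π.parts.erase B₀, β + ∑ j ∈ B \ N B, w j ≤ ∑ j ∈ N B, w j) :
    π.parts.erase B₀ = {B₁} ∧ ∑ j ∈ B₀ \ N B₀, w j = 0 ∧ ∑ j ∈ N B₀, w j = α := by
  have hsplit (B : Finset ι) (hB : B ∈ π.parts) :
      ∑ j ∈ B, w j = ∑ j ∈ B \ N B, w j + ∑ j ∈ N B, w j :=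
    (sum_sdiff (hN B hB)).symm
  have hrest_le : β * #((π.parts.erase B₀).erase B₁) ≤
      ∑ B ∈ (π.parts.erase B₀).erase B₁, ∑ j ∈ B, w j := by
    rw [mul_comm, ← smul_eq_mul]
    refine card_nsmul_le_sum _ _ _ fun B hB => ?_
    have hB' := mem_of_mem_erase hB
    rw [hsplit B (mem_of_mem_erase hB')]
    have := hrest B hB'
    omega
  have htot := π.sum_sum_parts w
  rw [htotal, ← add_sum_erase _ _ hB₀, ← add_sum_erase _ _ hB₁,
    hsplit B₀ hB₀, hsplit B₁ (mem_of_mem_erase hB₁)] at htot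
  -- Every further block weighs at least `β > 0`, but `B₀` and `B₁` already use up `α + β`.
  have hno_more : #((π.parts.erase B₀).erase B₁) = 0 := by
    by_contra hc
    have := Nat.le_mul_of_pos_right β (Nat.pos_of_ne_zero hc)
    have := hrest B₁ hB₁
    omega
  rw [card_eq_zero, erase_eq_empty_iff] at hno_more
  refine ⟨hno_more.resolve_left (ne_empty_of_mem hB₁), ?_⟩
  have := hrest B₁ hB₁
  omega

section Reduction

variable {k : ℕ} {a : Fin (2 * k) → ℕ} {v : Fin (2 * k) ⊕ Fin 2 → RatFunc ℚ}

def valueDegree (k : ℕ) : Fin (2 * k) ⊕ Fin 2 → ℕ :=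
  Sum.elim (fun _ => 1) ![4 * k, 2 * k]

def valueCoeff (a : Fin (2 * k) → ℕ) : Fin (2 * k) ⊕ Fin 2 → ℚ :=
  Sum.elim (fun i => a i) (fun _ => 1)

lemma sum_valueDegree (s : Finset (Fin (2 * k) ⊕ Fin 2)) :
    ∑ j ∈ s, valueDegree k j = #s.toLeft + (if Sum.inr 0 ∈ s then 4 * k else 0) +
      (if Sum.inr 1 ∈ s then 2 * k else 0) := by
  conv_lhs => rw [← toLeft_disjSum_toRight (u := s), sum_disjSum, ← filter_univ_mem s.toRight,
    sum_filter, Fin.sum_univ_two]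
  simp [valueDegree, add_assoc]

lemma sum_valueDegree_univ : ∑ j, valueDegree k j = 8 * k := by
  rw [sum_valueDegree]
  simp only [toLeft_univ, card_univ, Fintype.card_fin, mem_univ, ↓reduceIte]
  omega

lemma card_toLeft_of_sum_valueDegree_eq (hk : 1 ≤ k) {s : Finset (Fin (2 * k) ⊕ Fin 2)}
    (hs : ∑ j ∈ s, valueDegree k j = 5 * k) : #s.toLeft = k := by
  have hcard : #s.toLeft ≤ 2 * k := by simpa using card_le_univ s.toLeft
  rw [sum_valueDegree] at hs
  split_ifs at hs <;> omega

lemma card_toLeft_le_sum_valueDegree (s : Finset (Fin (2 * k) ⊕ Fin 2)) :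
    #s.toLeft ≤ ∑ j ∈ s, valueDegree k j := by
  rw [sum_valueDegree]
  omega

lemma prod_valueCoeff (s : Finset (Fin (2 * k) ⊕ Fin 2)) :
    ∏ j ∈ s, valueCoeff a j = ∏ i ∈ s.toLeft, (a i : ℚ) := by
  rw [← toLeft_disjSum_toRight (u := s), prod_disjSum, toLeft_disjSum]
  simp [valueCoeff]

lemma prod_valueCoeff_pos (ha : ∀ i, 0 < a i)
    (s : Finset (Fin (2 * k) ⊕ Fin 2)) : 0 < ∏ j ∈ s, valueCoeff a j := by
  rw [prod_valueCoeff]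
  exact prod_pos fun i _ => by exact_mod_cast ha i

lemma eq_C_mul_X_pow_of_values
    (hv1 : ∀ i, v (Sum.inl i) = (a i : RatFunc ℚ) * RatFunc.X)
    (hv2 : v (Sum.inr 0) = RatFunc.X ^ (4 * k))
    (hv3 : v (Sum.inr 1) = RatFunc.X ^ (2 * k)) (j : Fin (2 * k) ⊕ Fin 2) :
    v j = RatFunc.C (valueCoeff a j) * RatFunc.X ^ valueDegree k j := by
  rcases j with i | b
  · simp [hv1, valueCoeff, valueDegree]
  · fin_cases b
    · simp [hv2, valueCoeff, valueDegree]
    · simp [hv3, valueCoeff, valueDegree]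

lemma prod_eq_C_mul_X_pow
    (hv : ∀ j, v j = RatFunc.C (valueCoeff a j) * RatFunc.X ^ valueDegree k j)
    (s : Finset (Fin (2 * k) ⊕ Fin 2)) :
    ∏ j ∈ s, v j = RatFunc.C (∏ j ∈ s, valueCoeff a j) * RatFunc.X ^ ∑ j ∈ s, valueDegree k j := by
  rw [prod_congr rfl fun j _ => hv j, RatFunc.prod_C_mul_X_pow]

theorem exists_card_eq_prod_eq_of_blocks (hk : 1 ≤ k) (ha : ∀ i, 0 < a i) {m : ℕ} (hm : 0 < m)
    (hv : ∀ j, v j = RatFunc.C (valueCoeff a j) * RatFunc.X ^ valueDegree k j)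
    (π : Finpartition (univ : Finset (Fin (2 * k) ⊕ Fin 2)))
    (N : Finset (Fin (2 * k) ⊕ Fin 2) → Finset (Fin (2 * k) ⊕ Fin 2))
    (hN : ∀ B ∈ π.parts, N B ⊆ B) {B₀ : Finset (Fin (2 * k) ⊕ Fin 2)} (hB₀ : B₀ ∈ π.parts)
    (h : (∏ j ∈ N B₀, v j) / (∏ j ∈ B₀ \ N B₀, v j)
        - ∑ B ∈ π.parts.erase B₀, (∏ j ∈ N B, v j) / ∏ j ∈ B \ N B, v j
      = (m : RatFunc ℚ) * RatFunc.X ^ (5 * k) - (m : RatFunc ℚ) * RatFunc.X ^ (3 * k)) :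
    ∃ S : Finset (Fin (2 * k)), #S = k ∧ ∏ i ∈ S, a i = m := by
  let num (B : Finset (Fin (2 * k) ⊕ Fin 2)) : ℕ := ∑ j ∈ N B, valueDegree k j
  let den (B : Finset (Fin (2 * k) ⊕ Fin 2)) : ℕ := ∑ j ∈ B \ N B, valueDegree k j
  let r (B : Finset (Fin (2 * k) ⊕ Fin 2)) : ℚ :=
    (∏ j ∈ N B, valueCoeff a j) / ∏ j ∈ B \ N B, valueCoeff a j
  have hden (B : Finset (Fin (2 * k) ⊕ Fin 2)) : den B ≤ 8 * k :=
    sum_valueDegree_univ (k := k) ▸ sum_le_sum_of_subset (subset_univ _)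
  have hblock (B : Finset (Fin (2 * k) ⊕ Fin 2)) :
      RatFunc.X ^ (8 * k) * ((∏ j ∈ N B, v j) / ∏ j ∈ B \ N B, v j) =
        algebraMap (Polynomial ℚ) (RatFunc ℚ)
          (Polynomial.C (r B) * Polynomial.X ^ (8 * k - den B + num B)) := by
    rw [prod_eq_C_mul_X_pow hv, prod_eq_C_mul_X_pow hv]
    exact RatFunc.X_pow_mul_C_mul_X_pow_div (prod_valueCoeff_pos ha _).ne' (hden B)
  have hpoly : Polynomial.C (r B₀) * Polynomial.X ^ (8 * k - den B₀ + num B₀)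
      - ∑ B ∈ π.parts.erase B₀, Polynomial.C (r B) * Polynomial.X ^ (8 * k - den B + num B)
      = Polynomial.C (m : ℚ) * Polynomial.X ^ (8 * k + 5 * k)
        - Polynomial.C (m : ℚ) * Polynomial.X ^ (8 * k + 3 * k) := by
    apply RatFunc.algebraMap_injective ℚ
    simp only [map_sub, map_sum, ← hblock]
    rw [← mul_sum, ← mul_sub, h]
    simp only [map_mul, map_pow, RatFunc.algebraMap_X, pow_add, map_natCast]
    ring
  obtain ⟨he₀, hrest, B₁, hB₁, he₁⟩ := exponents_of_monomial_sub_sum_eq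
    (fun B _ => div_pos (prod_valueCoeff_pos ha _) (prod_valueCoeff_pos ha _))
    (by exact_mod_cast hm) (by omega) hpoly
  obtain ⟨herase, hden₀, hnum₀⟩ := π.parts_erase_eq_singleton (valueDegree k) hN
    (α := 5 * k) (β := 3 * k) (by omega) (by rw [sum_valueDegree_univ]; ring) hB₀ hB₁
    (show 5 * k + den B₀ ≤ num B₀ by have := hden B₀; omega)
    (fun B hB => show 3 * k + den B ≤ num B by
      have := hden B; rcases hrest B hB with h | h <;> omega)
  have hr₀ : r B₀ = m := by
    have hc := coeff_monomial_sub_sum_eq hpoly (8 * k + 5 * k)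
    rw [herase, sum_singleton, if_pos he₀.symm, if_neg (by omega), if_pos rfl, if_neg (by omega)]
      at hc
    simpa using hc
  have hden_empty : (B₀ \ N B₀).toLeft = ∅ :=
    card_eq_zero.mp (Nat.eq_zero_of_le_zero (hden₀ ▸ card_toLeft_le_sum_valueDegree _))
  refine ⟨(N B₀).toLeft, card_toLeft_of_sum_valueDegree_eq hk hnum₀, ?_⟩
  have hr₀_prod : r B₀ = ∏ i ∈ (N B₀).toLeft, (a i : ℚ) := by
    simp only [r, prod_valueCoeff, hden_empty, prod_empty, div_one]
  exact_mod_cast hr₀_prod.symm.trans hr₀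

lemma prod_compl_eq_of_prod_eq {ι : Type*} [Fintype ι] [DecidableEq ι] {b : ι → ℕ} {m : ℕ}
    (hm : ∏ i, b i = m ^ 2) (hm0 : 0 < m) {S : Finset ι} (hS : ∏ i ∈ S, b i = m) :
    ∏ i ∈ Sᶜ, b i = m := by
  have h := prod_mul_prod_compl S b
  rw [hS, hm, sq] at h
  exact Nat.eq_of_mul_eq_mul_left hm0 h

theorem exists_blocks_of_card_eq_prod_eq {m : ℕ} (hm : ∏ i, a i = m ^ 2) (hm0 : 0 < m)
    (hv1 : ∀ i, v (Sum.inl i) = (a i : RatFunc ℚ) * RatFunc.X)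
    (hv2 : v (Sum.inr 0) = RatFunc.X ^ (4 * k))
    (hv3 : v (Sum.inr 1) = RatFunc.X ^ (2 * k))
    {S : Finset (Fin (2 * k))} (hS : #S = k) (hSa : ∏ i ∈ S, a i = m) :
    ∃ π : Finpartition (univ : Finset (Fin (2 * k) ⊕ Fin 2)),
      ∃ N : Finset (Fin (2 * k) ⊕ Fin 2) → Finset (Fin (2 * k) ⊕ Fin 2),
        (∀ B ∈ π.parts, (N B).Nonempty ∧ N B ⊆ B) ∧
        ∃ B₀ ∈ π.parts,
          (∏ j ∈ N B₀, v j) / (∏ j ∈ B₀ \ N B₀, v j)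
            - ∑ B ∈ π.parts.erase B₀, (∏ j ∈ N B, v j) / ∏ j ∈ B \ N B, v j
          = (m : RatFunc ℚ) * RatFunc.X ^ (5 * k)
            - (m : RatFunc ℚ) * RatFunc.X ^ (3 * k) := by
  have hprod (T : Finset (Fin (2 * k))) (b : Fin 2) :
      ∏ j ∈ T.disjSum {b}, v j =
        ((∏ i ∈ T, a i : ℕ) : RatFunc ℚ) * RatFunc.X ^ #T * v (Sum.inr b) := by
    rw [prod_disjSum, prod_singleton]
    simp [hv1, prod_mul_distrib]
  have hSc : #Sᶜ = k := by rw [card_compl, Fintype.card_fin, hS]; omega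
  set B₀ : Finset (Fin (2 * k) ⊕ Fin 2) := S.disjSum {0}
  set B₁ : Finset (Fin (2 * k) ⊕ Fin 2) := Sᶜ.disjSum {1}
  have hB₀ : B₀ ≠ ∅ := ne_empty_of_mem (inr_mem_disjSum.2 (mem_singleton_self 0))
  have hB₁ : B₁ ≠ ∅ := ne_empty_of_mem (inr_mem_disjSum.2 (mem_singleton_self 1))
  have hdisj : Disjoint B₀ B₁ := by
    rw [disjoint_left]
    rintro (i | b) <;>
      simp only [inl_mem_disjSum, inr_mem_disjSum, mem_compl, mem_singleton, B₀, B₁]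
    · exact fun hi hi' => hi' hi
    · omega
  have hunion : B₀ ⊔ B₁ = univ := by
    ext (i | b)
    · simp [B₀, B₁, em]
    · fin_cases b <;> simp [B₀, B₁]
  let π := (Finpartition.indiscrete hB₀).extend hB₁ hdisj hunion
  have hne : B₁ ≠ B₀ := fun h => hB₀ (disjoint_self.1 (h ▸ hdisj))
  have herase : π.parts.erase B₀ = {B₁} := by
    simp [π, erase_insert_of_ne hne]
  refine ⟨π, id, fun B hB => ⟨nonempty_iff_ne_empty.2 (π.ne_empty hB), subset_rfl⟩, B₀,
    by simp [π], ?_⟩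
  rw [herase, sum_singleton, id, id, sdiff_self, sdiff_self, bot_eq_empty, prod_empty, div_one,
    div_one, hprod, hprod, hv2, hv3, hSa, hS, hSc, prod_compl_eq_of_prod_eq hm hm0 hSa]
  ring

end Reduction

theorem stmt_11 (k : ℕ) (hk : 1 ≤ k) (a : Fin (2 * k) → ℕ) (ha : ∀ i, 0 < a i)
    (m : ℕ) (hm : ∏ i, a i = m ^ 2)
    (v : Fin (2 * k) ⊕ Fin 2 → RatFunc ℚ)
    (hv1 : ∀ i, v (Sum.inl i) = (a i : RatFunc ℚ) * RatFunc.X)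
    (hv2 : v (Sum.inr 0) = RatFunc.X ^ (4 * k))
    (hv3 : v (Sum.inr 1) = RatFunc.X ^ (2 * k)) :
    (∃ π : Finpartition (Finset.univ : Finset (Fin (2 * k) ⊕ Fin 2)),
      ∃ N : Finset (Fin (2 * k) ⊕ Fin 2) → Finset (Fin (2 * k) ⊕ Fin 2),
        (∀ B ∈ π.parts, (N B).Nonempty ∧ N B ⊆ B) ∧
        ∃ B₀ ∈ π.parts,
          (∏ j ∈ N B₀, v j) / (∏ j ∈ B₀ \ N B₀, v j)
            - ∑ B ∈ π.parts.erase B₀, (∏ j ∈ N B, v j) / ∏ j ∈ B \ N B, v j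
          = (m : RatFunc ℚ) * RatFunc.X ^ (5 * k)
            - (m : RatFunc ℚ) * RatFunc.X ^ (3 * k)) ↔
    (∃ S : Finset (Fin (2 * k)), S.card = k ∧ ∏ i ∈ S, a i = m) := by
  have hm0 : 0 < m := by
    have hpos : 0 < m ^ 2 := hm ▸ prod_pos fun i _ => ha i
    exact pos_of_ne_zero (by rintro rfl; simp at hpos)
  constructor
  · rintro ⟨π, N, hN, B₀, hB₀, h⟩
    exact exists_card_eq_prod_eq_of_blocks hk ha hm0 (eq_C_mul_X_pow_of_values hv1 hv2 hv3) π N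
      (fun B hB => (hN B hB).2) hB₀ h
  · rintro ⟨S, hS, hSa⟩
    exact exists_blocks_of_card_eq_prod_eq hm hm0 hv1 hv2 hv3 hS hSa
end

section
/- Let k ≥ 1, let a : Fin (2k) → ℕ with a i > 0 for all i, and let m : ℕ satisfy ∏_i a i = m². In the field RatFunc ℚ, let ι = Fin (2k) ⊕ Fin 2 and define v : ι → RatFunc ℚ by v (inl i) = (a i) · X, v (inr 0) = m · X^{4k}, and v (inr 1) = m · X^{2k}. Suppose π is a finite partition of ι into nonempty blocks, d assigns to each block a distinguished element d(B) ∈ B, and ε assigns to each block a sign in {1, −1} with ε B₀ = 1 for at least one block B₀, such that ∑_{B ∈ π} ε B · (v (d B) / ∏_{j ∈ B, j ≠ d B} v j) = X^{3k} − X^k. Then π has exactly two blocks B₁ and B₂: inr 0 ∈ B₁ with d(B₁) = inr 0, ε B₁ = 1, B₁ contains exactly k of the indices inl i, and the product of the corresponding a i equals m; and inr 1 ∈ B₂ with d(B₂) = inr 1, ε B₂ = −1, B₂ contains the remaining k indices inl i, whose a i likewise have product m. -/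
/-!
A block `B` with dividend `d` evaluates to a monomial `± c_B X ^ e_B` with `c_B > 0` and
`e_B = deg d - ∑_{j ∈ B \ {d}} deg j = 2 deg d - deg B`, so the identity can be compared
coefficientwise in the Laurent series field. Only a block with dividend `m X^{4k}` that contains
exactly `k` of the `a_i X` and not `m X^{2k}` has exponent `3k`; it alone produces `X^{3k}`, so its
sign is `+1` and its coefficient `m / ∏ a_i` is `1`. A block meeting neither `m X^{4k}` nor
`m X^{2k}` has exponent `2 - #B ≤ 1`. The block of `m X^{2k}` must then have it as its dividend and
contain the remaining `k` indices: with fewer it would be alone at an exponent in `(k, 2k]`, and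
with an `a_i X` as dividend no block could produce `X^k`. Counting indices leaves no other block.
-/

open Finset HahnSeries
open scoped LaurentSeries

theorem Finset.sum_filter_eq_of_unique {α M : Type*} [AddCommMonoid M] {s : Finset α}
    {p : α → Prop} [DecidablePred p] {f : α → M} {a : α} (ha : a ∈ s) (hpa : p a)
    (h : ∀ x ∈ s, p x → x = a) : ∑ x ∈ s with p x, f x = f a := by
  rw [sum_filter, sum_eq_single_of_mem a ha fun x hx hne => if_neg (mt (h x hx) hne), if_pos hpa]

theorem Finset.exists_mem_of_sum_filter_ne_zero {α M : Type*} [AddCommMonoid M] {s : Finset α}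
    {p : α → Prop} [DecidablePred p] {f : α → M} (h : ∑ x ∈ s with p x, f x ≠ 0) :
    ∃ x ∈ s, p x := by
  obtain ⟨x, hx, -⟩ := exists_ne_zero_of_sum_ne_zero h
  exact ⟨x, (mem_filter.1 hx).1, (mem_filter.1 hx).2⟩

theorem Finset.filter_inl_mem_eq_toLeft {α β : Type*} [Fintype α] [DecidableEq α] [DecidableEq β]
    (B : Finset (α ⊕ β)) : univ.filter (fun i => Sum.inl i ∈ B) = B.toLeft := by
  ext; simp

theorem Finpartition.sum_card_toLeft_s15 {α β : Type*} [Fintype α] [Fintype β] [DecidableEq α]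
    [DecidableEq β] (P : Finpartition (univ : Finset (α ⊕ β))) :
    ∑ B ∈ P.parts, #B.toLeft = Fintype.card α := by
  have hcover : P.parts.biUnion toLeft = univ := by
    ext i
    simpa using P.exists_mem (mem_univ (Sum.inl i))
  rw [← card_univ, ← hcover, card_biUnion]
  intro B hB B' hB' hne
  exact disjoint_left.2 fun i hi hi' =>
    hne (P.eq_of_mem_parts hB hB' (mem_toLeft.1 hi) (mem_toLeft.1 hi'))

theorem HahnSeries.prod_single {ι Γ R : Type*} [DecidableEq ι] [AddCommMonoid Γ] [PartialOrder Γ]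
    [IsOrderedCancelAddMonoid Γ] [CommSemiring R] (s : Finset ι) (e : ι → Γ) (c : ι → R) :
    ∏ j ∈ s, single (e j) (c j) = single (∑ j ∈ s, e j) (∏ j ∈ s, c j) := by
  induction s using Finset.induction_on with
  | empty => simp
  | insert j s hj ih => rw [prod_insert hj, prod_insert hj, sum_insert hj, ih, single_mul_single]

theorem RatFunc.coe_natCast_mul_X_pow {F : Type*} [Field F] (n e : ℕ) :
    (((n : RatFunc F) * RatFunc.X ^ e : RatFunc F) : F⸨X⸩) = single (e : ℤ) (n : F) := by
  rw [map_mul, map_pow, map_natCast, RatFunc.coe_X, single_pow, one_pow,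
    ← map_natCast (HahnSeries.C : F →+* F⸨X⸩), C_apply, single_mul_single, zero_add, mul_one,
    nsmul_one]

theorem RatFunc.coeff_X_pow_sub_X_pow {F : Type*} [Field F] (p q : ℕ) (n : ℤ) :
    ((RatFunc.X ^ p - RatFunc.X ^ q : RatFunc F) : F⸨X⸩).coeff n =
      (if n = p then 1 else 0) - (if n = q then 1 else 0) := by
  simp only [map_sub, map_pow, RatFunc.coe_X, single_pow, one_pow, nsmul_one, coeff_sub,
    coeff_single]
  convert rfl

theorem sign_eq_and_eq_one_of_mul_eq {F : Type*} [Field F] [LinearOrder F] [IsStrictOrderedRing F]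
    {ε η : ℤ} {c : F} (hε : ε = 1 ∨ ε = -1) (hη : η = 1 ∨ η = -1) (hc : 0 < c)
    (h : (ε : F) * c = η) : ε = η ∧ c = 1 := by
  rcases hε with rfl | rfl <;> rcases hη with rfl | rfl <;> norm_num at h ⊢ <;> linarith

section BlockValue

variable {ι : Type*} [DecidableEq ι]

def blockExponent (deg : ι → ℤ) (d : Finset ι → ι) (B : Finset ι) : ℤ :=
  deg (d B) - ∑ j ∈ B.erase (d B), deg j

def blockCoeff {F : Type*} [Field F] (c : ι → F) (d : Finset ι → ι) (B : Finset ι) : F :=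
  c (d B) / ∏ j ∈ B.erase (d B), c j

theorem blockExponent_eq (deg : ι → ℤ) {d : Finset ι → ι} {B : Finset ι} (h : d B ∈ B) :
    blockExponent deg d B = 2 * deg (d B) - ∑ j ∈ B, deg j := by
  rw [blockExponent, ← add_sum_erase B deg h]
  ring

theorem blockCoeff_pos {F : Type*} [Field F] [LinearOrder F] [IsStrictOrderedRing F]
    {c : ι → F} (hc : ∀ j, 0 < c j) (d : Finset ι → ι) (B : Finset ι) :
    0 < blockCoeff c d B :=
  div_pos (hc _) (prod_pos fun j _ => hc j)

variable {F : Type*} [Field F] {v : ι → RatFunc F} {deg : ι → ℤ} {c : ι → F}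

theorem coe_blockValue (hv : ∀ j, (v j : F⸨X⸩) = single (deg j) (c j))
    (d : Finset ι → ι) (B : Finset ι) :
    ((v (d B) / ∏ j ∈ B.erase (d B), v j : RatFunc F) : F⸨X⸩) =
      single (blockExponent deg d B) (blockCoeff c d B) := by
  simp only [map_div₀, map_prod, hv, HahnSeries.prod_single, single_div_single, blockExponent,
    blockCoeff]

theorem sum_filter_blockExponent_eq_coeff (hv : ∀ j, (v j : F⸨X⸩) = single (deg j) (c j))
    {P : Finset (Finset ι)} {d : Finset ι → ι} {ε : Finset ι → ℤ} {f : RatFunc F}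
    (h : ∑ B ∈ P, (ε B : RatFunc F) * (v (d B) / ∏ j ∈ B.erase (d B), v j) = f) (n : ℤ) :
    ∑ B ∈ P with blockExponent deg d B = n, (ε B : F) * blockCoeff c d B =
      (f : F⸨X⸩).coeff n := by
  rw [← h, map_sum, coeff_sum, sum_filter]
  refine sum_congr rfl fun B _ => ?_
  rw [map_mul, coe_blockValue hv, map_intCast, ← map_intCast (C : F →+* F⸨X⸩), C_apply,
    single_mul_single, zero_add, coeff_single]
  congr 1
  exact propext eq_comm

end BlockValue

namespace AddSubDivReduction

variable {k : ℕ}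

def degree (k : ℕ) : Fin (2 * k) ⊕ Fin 2 → ℤ :=
  Sum.elim (fun _ => 1) ![4 * k, 2 * k]

def coefficient (a : Fin (2 * k) → ℕ) (m : ℕ) : Fin (2 * k) ⊕ Fin 2 → ℚ :=
  Sum.elim (fun i => a i) fun _ => m

theorem coefficient_pos {a : Fin (2 * k) → ℕ} {m : ℕ} (ha : ∀ i, 0 < a i) (hm : 0 < m)
    (j : Fin (2 * k) ⊕ Fin 2) : 0 < coefficient a m j := by
  rcases j with i | x <;> simp [coefficient, ha, hm]

theorem coe_eq_single_degree {a : Fin (2 * k) → ℕ} {m : ℕ} {v : Fin (2 * k) ⊕ Fin 2 → RatFunc ℚ}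
    (hv1 : ∀ i, v (Sum.inl i) = (a i : RatFunc ℚ) * RatFunc.X)
    (hv2 : v (Sum.inr 0) = (m : RatFunc ℚ) * RatFunc.X ^ (4 * k))
    (hv3 : v (Sum.inr 1) = (m : RatFunc ℚ) * RatFunc.X ^ (2 * k)) (j : Fin (2 * k) ⊕ Fin 2) :
    (v j : ℚ⸨X⸩) = single (degree k j) (coefficient a m j) := by
  rcases j with i | x
  · rw [hv1, ← pow_one RatFunc.X, RatFunc.coe_natCast_mul_X_pow]
    rfl
  · obtain rfl | rfl : x = 0 ∨ x = 1 := by omega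
    · rw [hv2, RatFunc.coe_natCast_mul_X_pow]
      simp [degree, coefficient]
    · rw [hv3, RatFunc.coe_natCast_mul_X_pow]
      simp [degree, coefficient]

theorem sum_degree (B : Finset (Fin (2 * k) ⊕ Fin 2)) :
    ∑ j ∈ B, degree k j = #B.toLeft + (if Sum.inr 0 ∈ B then 4 * k else 0)
      + (if Sum.inr 1 ∈ B then 2 * k else 0) := by
  rw [sum_sum_eq_sum_toLeft_add_sum_toRight, ← univ_inter B.toRight, ← sum_ite_mem,
    Fin.sum_univ_two]
  simp [degree, add_assoc]

theorem one_le_card_toLeft {B : Finset (Fin (2 * k) ⊕ Fin 2)} {i : Fin (2 * k)}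
    (h : Sum.inl i ∈ B) : 1 ≤ #B.toLeft :=
  card_pos.2 ⟨i, mem_toLeft.2 h⟩

variable {d : Finset (Fin (2 * k) ⊕ Fin 2) → Fin (2 * k) ⊕ Fin 2} {B : Finset (Fin (2 * k) ⊕ Fin 2)}

theorem blockExponent_degree (h : d B ∈ B) :
    blockExponent (degree k) d B = 2 * degree k (d B) - (#B.toLeft
      + (if Sum.inr 0 ∈ B then 4 * k else 0) + (if Sum.inr 1 ∈ B then 2 * k else 0) : ℤ) := by
  rw [blockExponent_eq _ h, sum_degree]

theorem dividend_eq_inr_zero_of_blockExponent_eq (hk : 1 ≤ k) (h : d B ∈ B)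
    (he : blockExponent (degree k) d B = 3 * k) :
    d B = Sum.inr 0 ∧ Sum.inr 1 ∉ B ∧ #B.toLeft = k := by
  rw [blockExponent_degree h] at he
  rcases hdB : d B with i | x
  · rw [hdB] at h he
    have := one_le_card_toLeft h
    simp only [degree, Sum.elim_inl] at he
    split_ifs at he <;> omega
  · rw [hdB] at h he
    obtain rfl | rfl : x = 0 ∨ x = 1 := by omega
    · by_cases h1 : Sum.inr 1 ∈ B <;> simp [degree, h, h1] at he ⊢ <;> omega
    · by_cases h0 : Sum.inr 0 ∈ B <;> simp [degree, h, h0] at he <;> omega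

theorem blockExponent_leading_block (h0 : Sum.inr 0 ∈ B) (hdB : d B = Sum.inr 0)
    (h1 : Sum.inr 1 ∉ B) (ht : #B.toLeft = k) : blockExponent (degree k) d B = 3 * k := by
  rw [blockExponent_degree (hdB ▸ h0), hdB]
  simp [degree, h0, h1, ht]
  ring

theorem blockExponent_of_dividend_eq_inr_one (h0 : Sum.inr 0 ∉ B) (h1 : Sum.inr 1 ∈ B)
    (hdB : d B = Sum.inr 1) : blockExponent (degree k) d B = 2 * k - #B.toLeft := by
  rw [blockExponent_degree (hdB ▸ h1), hdB]
  simp [degree, h0, h1]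
  ring

theorem blockExponent_neg_of_dividend_eq_inl (hk : 1 ≤ k) {i : Fin (2 * k)}
    (hdB : d B = Sum.inl i) (hi : Sum.inl i ∈ B) (h1 : Sum.inr 1 ∈ B) :
    blockExponent (degree k) d B < 0 := by
  rw [blockExponent_degree (hdB ▸ hi), hdB]
  have := one_le_card_toLeft hi
  simp only [degree, Sum.elim_inl, if_pos h1]
  split_ifs <;> omega

theorem blockExponent_of_inr_notMem (h : d B ∈ B) (h0 : Sum.inr 0 ∉ B) (h1 : Sum.inr 1 ∉ B) :
    blockExponent (degree k) d B = 2 - #B.toLeft ∧ 1 ≤ #B.toLeft := by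
  rcases hdB : d B with i | x
  · rw [hdB] at h
    refine ⟨?_, one_le_card_toLeft h⟩
    rw [blockExponent_degree (hdB ▸ h), hdB]
    simp [degree, h0, h1]
  · rw [hdB] at h
    obtain rfl | rfl : x = 0 ∨ x = 1 := by omega
    exacts [absurd h h0, absurd h h1]

theorem blockCoeff_coefficient {a : Fin (2 * k) → ℕ} {m : ℕ} {x : Fin 2} (hR : B.toRight = {x})
    (hdB : d B = Sum.inr x) :
    blockCoeff (coefficient a m) d B = m / ∏ i ∈ B.toLeft, (a i : ℚ) := by
  have hL : (B.erase (Sum.inr x)).toLeft = B.toLeft := by ext; simp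
  have hR' : (B.erase (Sum.inr x)).toRight = ∅ := by
    ext y
    simp only [mem_toRight, mem_erase, ne_eq, Sum.inr.injEq, notMem_empty, iff_false, not_and]
    exact fun hy h => hy (mem_singleton.1 (hR ▸ mem_toRight.2 h))
  rw [blockCoeff, hdB, prod_sum_eq_prod_toLeft_mul_prod_toRight, hL, hR']
  simp [coefficient]

theorem blockCoeff_coefficient_eq_one_iff {a : Fin (2 * k) → ℕ} {m : ℕ} {x : Fin 2}
    (ha : ∀ i, 0 < a i) (hR : B.toRight = {x}) (hdB : d B = Sum.inr x) :
    blockCoeff (coefficient a m) d B = 1 ↔ ∏ i ∈ B.toLeft, a i = m := by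
  rw [blockCoeff_coefficient hR hdB, div_eq_one_iff_eq (prod_ne_zero_iff.2 fun i _ => by
    exact_mod_cast (ha i).ne'), eq_comm]
  exact_mod_cast Iff.rfl

variable {π : Finpartition (univ : Finset (Fin (2 * k) ⊕ Fin 2))}
  {B₁ B₂ B' : Finset (Fin (2 * k) ⊕ Fin 2)}

theorem sum_erase_card_toLeft (hB₁ : B₁ ∈ π.parts) (ht₁ : #B₁.toLeft = k) :
    ∑ B ∈ π.parts.erase B₁, #B.toLeft = k := by
  have := π.sum_card_toLeft_s15
  rw [← add_sum_erase _ _ hB₁, ht₁, Fintype.card_fin] at this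
  omega

theorem card_toLeft_le (hB₁ : B₁ ∈ π.parts) (ht₁ : #B₁.toLeft = k) (hB : B ∈ π.parts)
    (hne : B ≠ B₁) : #B.toLeft ≤ k :=
  (single_le_sum (f := fun B => #B.toLeft) (fun _ _ => Nat.zero_le _)
    (mem_erase.2 ⟨hne, hB⟩)).trans_eq (sum_erase_card_toLeft hB₁ ht₁)

theorem card_toLeft_add_le (hB₁ : B₁ ∈ π.parts) (ht₁ : #B₁.toLeft = k) (hB : B ∈ π.parts)
    (hB' : B' ∈ π.parts) (hne : B ≠ B₁) (hne' : B' ≠ B₁) (hBB' : B ≠ B') :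
    #B.toLeft + #B'.toLeft ≤ k :=
  (add_le_sum (f := fun B => #B.toLeft) (fun _ _ => Nat.zero_le _) (mem_erase.2 ⟨hne, hB⟩)
    (mem_erase.2 ⟨hne', hB'⟩) hBB').trans_eq (sum_erase_card_toLeft hB₁ ht₁)

theorem other_block_spec (hd : ∀ B ∈ π.parts, d B ∈ B) (hB₁ : B₁ ∈ π.parts) (h0₁ : Sum.inr 0 ∈ B₁)
    (ht₁ : #B₁.toLeft = k) (hB₂ : B₂ ∈ π.parts) (h1₂ : Sum.inr 1 ∈ B₂) (hne : B₂ ≠ B₁)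
    (hB : B ∈ π.parts) (hB1 : B ≠ B₁) (hB2 : B ≠ B₂) :
    blockExponent (degree k) d B = 2 - #B.toLeft ∧ 1 ≤ #B.toLeft ∧
      #B.toLeft + #B₂.toLeft ≤ k := by
  obtain ⟨he, ht⟩ := blockExponent_of_inr_notMem (hd B hB)
    (fun h => hB1 (π.eq_of_mem_parts hB hB₁ h h0₁)) (fun h => hB2 (π.eq_of_mem_parts hB hB₂ h h1₂))
  exact ⟨he, ht, card_toLeft_add_le hB₁ ht₁ hB hB₂ hB1 hne hB2⟩

theorem parts_eq_pair (hB₁ : B₁ ∈ π.parts) (h0₁ : Sum.inr 0 ∈ B₁) (ht₁ : #B₁.toLeft = k)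
    (hB₂ : B₂ ∈ π.parts) (h1₂ : Sum.inr 1 ∈ B₂) (ht₂ : #B₂.toLeft = k) (hne : B₁ ≠ B₂) :
    π.parts = {B₁, B₂} := by
  refine Subset.antisymm (fun B hB => ?_) (insert_subset hB₁ (singleton_subset_iff.2 hB₂))
  by_contra hB12
  simp only [mem_insert, mem_singleton, not_or] at hB12
  obtain ⟨i | x, hj⟩ := π.nonempty_of_mem_parts hB
  · have := card_toLeft_add_le hB₁ ht₁ hB hB₂ hB12.1 hne.symm hB12.2
    have := one_le_card_toLeft hj
    omega
  · obtain rfl | rfl : x = 0 ∨ x = 1 := by omega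
    exacts [hB12.1 (π.eq_of_mem_parts hB hB₁ hj h0₁), hB12.2 (π.eq_of_mem_parts hB hB₂ hj h1₂)]

variable {R : Type*} [Ring R] [Nontrivial R] {w : Finset (Fin (2 * k) ⊕ Fin 2) → R}

theorem exists_leading_block (hk : 1 ≤ k) (hd : ∀ B ∈ π.parts, d B ∈ B)
    (hcoeff : ∀ n : ℤ, ∑ B ∈ π.parts with blockExponent (degree k) d B = n, w B =
      (if n = 3 * k then 1 else 0) - (if n = k then 1 else 0)) :
    ∃ B₁ ∈ π.parts, d B₁ = Sum.inr 0 ∧ Sum.inr 1 ∉ B₁ ∧ #B₁.toLeft = k ∧ w B₁ = 1 := by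
  have h3 := hcoeff (3 * k)
  rw [if_pos rfl, if_neg (by omega), sub_zero] at h3
  obtain ⟨B₁, hB₁, he₁⟩ := exists_mem_of_sum_filter_ne_zero (h3 ▸ one_ne_zero)
  obtain ⟨hd₁, h1, ht⟩ := dividend_eq_inr_zero_of_blockExponent_eq hk (hd _ hB₁) he₁
  refine ⟨B₁, hB₁, hd₁, h1, ht, h3 ▸ (sum_filter_eq_of_unique hB₁ he₁ fun B hB he => ?_).symm⟩
  have h0 := (dividend_eq_inr_zero_of_blockExponent_eq hk (hd B hB) he).1 ▸ hd B hB
  exact π.eq_of_mem_parts hB hB₁ h0 (hd₁ ▸ hd _ hB₁)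

theorem trailing_block_dividend_and_card (hk : 1 ≤ k) (hd : ∀ B ∈ π.parts, d B ∈ B)
    (hw : ∀ B ∈ π.parts, w B ≠ 0)
    (hcoeff : ∀ n : ℤ, ∑ B ∈ π.parts with blockExponent (degree k) d B = n, w B =
      (if n = 3 * k then 1 else 0) - (if n = k then 1 else 0))
    (hB₁ : B₁ ∈ π.parts) (hd₁ : d B₁ = Sum.inr 0) (h1₁ : Sum.inr 1 ∉ B₁) (ht₁ : #B₁.toLeft = k)
    (hB₂ : B₂ ∈ π.parts) (h1₂ : Sum.inr 1 ∈ B₂) :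
    d B₂ = Sum.inr 1 ∧ #B₂.toLeft = k := by
  have h0₁ : Sum.inr 0 ∈ B₁ := hd₁ ▸ hd B₁ hB₁
  have he₁ := blockExponent_leading_block h0₁ hd₁ h1₁ ht₁
  have hne : B₂ ≠ B₁ := by rintro rfl; exact h1₁ h1₂
  have h0₂ : Sum.inr 0 ∉ B₂ := fun h => hne (π.eq_of_mem_parts hB₂ hB₁ h h0₁)
  have hsmall {B} (hB : B ∈ π.parts) (hB1 : B ≠ B₁) (hB2 : B ≠ B₂) :=
    other_block_spec hd hB₁ h0₁ ht₁ hB₂ h1₂ hne hB hB1 hB2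
  rcases hdB : d B₂ with i | x
  · -- then no block has exponent `k`
    have hk' := hcoeff k
    rw [if_neg (by omega), if_pos rfl, zero_sub] at hk'
    obtain ⟨B, hB, he⟩ := exists_mem_of_sum_filter_ne_zero (hk' ▸ neg_ne_zero.2 one_ne_zero)
    have hB1 : B ≠ B₁ := by rintro rfl; omega
    have hB2 : B ≠ B₂ := by
      rintro rfl
      have := blockExponent_neg_of_dividend_eq_inl hk hdB (hdB ▸ hd _ hB₂) h1₂
      omega
    have := one_le_card_toLeft (hdB ▸ hd _ hB₂)
    have := hsmall hB hB1 hB2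
    omega
  · obtain rfl | rfl : x = 0 ∨ x = 1 := by omega
    · exact absurd (hdB ▸ hd _ hB₂) h0₂
    refine ⟨rfl, le_antisymm (card_toLeft_le hB₁ ht₁ hB₂ hne) (not_lt.1 fun hlt => ?_)⟩
    -- otherwise `B₂` is the only block of its exponent, which lies strictly between `k` and `3k`
    have he₂ := blockExponent_of_dividend_eq_inr_one h0₂ h1₂ hdB
    have hc := hcoeff (2 * k - #B₂.toLeft)
    rw [if_neg (by omega), if_neg (by omega), sub_zero, sum_filter_eq_of_unique hB₂ he₂] at hc
    · exact hw B₂ hB₂ hc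
    intro B hB he
    by_contra hB2
    have hB1 : B ≠ B₁ := by rintro rfl; omega
    have := hsmall hB hB1 hB2
    omega

theorem exists_parts_eq_pair (hk : 1 ≤ k) (hd : ∀ B ∈ π.parts, d B ∈ B)
    (hw : ∀ B ∈ π.parts, w B ≠ 0)
    (hcoeff : ∀ n : ℤ, ∑ B ∈ π.parts with blockExponent (degree k) d B = n, w B =
      (if n = 3 * k then 1 else 0) - (if n = k then 1 else 0)) :
    ∃ B₁ B₂, B₁ ≠ B₂ ∧ π.parts = {B₁, B₂} ∧
      B₁.toRight = {0} ∧ d B₁ = Sum.inr 0 ∧ #B₁.toLeft = k ∧ w B₁ = 1 ∧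
      B₂.toRight = {1} ∧ d B₂ = Sum.inr 1 ∧ #B₂.toLeft = k ∧ w B₂ = -1 := by
  obtain ⟨B₁, hB₁, hd₁, h1₁, ht₁, hw₁⟩ := exists_leading_block hk hd hcoeff
  obtain ⟨B₂, hB₂, h1₂⟩ := π.exists_mem (mem_univ (Sum.inr 1))
  obtain ⟨hd₂, ht₂⟩ := trailing_block_dividend_and_card hk hd hw hcoeff hB₁ hd₁ h1₁ ht₁ hB₂ h1₂
  have h0₁ : Sum.inr 0 ∈ B₁ := hd₁ ▸ hd B₁ hB₁
  have hne : B₁ ≠ B₂ := by rintro rfl; exact h1₁ h1₂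
  have h0₂ : Sum.inr 0 ∉ B₂ := fun h => hne (π.eq_of_mem_parts hB₁ hB₂ h0₁ h)
  have hparts := parts_eq_pair hB₁ h0₁ ht₁ hB₂ h1₂ ht₂ hne
  have hk' := hcoeff k
  rw [if_neg (by omega), if_pos rfl, zero_sub, sum_filter_eq_of_unique hB₂
    (by rw [blockExponent_of_dividend_eq_inr_one h0₂ h1₂ hd₂, ht₂]; ring)] at hk'
  · refine ⟨B₁, B₂, hne, hparts, ?_, hd₁, ht₁, hw₁, ?_, hd₂, ht₂, hk'⟩ <;>
      ext y <;> (obtain rfl | rfl : y = 0 ∨ y = 1 := by omega) <;> simp [h0₁, h1₁, h0₂, h1₂]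
  intro B hB he
  rw [hparts, mem_insert, mem_singleton] at hB
  refine hB.resolve_left ?_
  rintro rfl
  rw [blockExponent_leading_block h0₁ hd₁ h1₁ ht₁] at he
  omega

end AddSubDivReduction

open AddSubDivReduction in
theorem stmt_15_general (k : ℕ) (hk : 1 ≤ k) (a : Fin (2 * k) → ℕ) (ha : ∀ i, 0 < a i)
    (m : ℕ) (hm : ∏ i, a i = m ^ 2)
    (v : Fin (2 * k) ⊕ Fin 2 → RatFunc ℚ)
    (hv1 : ∀ i, v (Sum.inl i) = (a i : RatFunc ℚ) * RatFunc.X)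
    (hv2 : v (Sum.inr 0) = (m : RatFunc ℚ) * RatFunc.X ^ (4 * k))
    (hv3 : v (Sum.inr 1) = (m : RatFunc ℚ) * RatFunc.X ^ (2 * k))
    (π : Finpartition (Finset.univ : Finset (Fin (2 * k) ⊕ Fin 2)))
    (d : Finset (Fin (2 * k) ⊕ Fin 2) → Fin (2 * k) ⊕ Fin 2)
    (hd : ∀ B ∈ π.parts, d B ∈ B)
    (ε : Finset (Fin (2 * k) ⊕ Fin 2) → ℤ)
    (hε : ∀ B ∈ π.parts, ε B = 1 ∨ ε B = -1)
    (h : ∑ B ∈ π.parts, (ε B : RatFunc ℚ) * (v (d B) / ∏ j ∈ B.erase (d B), v j)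
      = RatFunc.X ^ (3 * k) - RatFunc.X ^ k) :
    ∃ B₁ B₂ : Finset (Fin (2 * k) ⊕ Fin 2), B₁ ≠ B₂ ∧ π.parts = {B₁, B₂} ∧
      Sum.inr 0 ∈ B₁ ∧ d B₁ = Sum.inr 0 ∧ ε B₁ = 1 ∧
      (Finset.univ.filter (fun i : Fin (2 * k) => Sum.inl i ∈ B₁)).card = k ∧
      (∏ i ∈ Finset.univ.filter (fun i : Fin (2 * k) => Sum.inl i ∈ B₁), a i = m) ∧
      Sum.inr 1 ∈ B₂ ∧ d B₂ = Sum.inr 1 ∧ ε B₂ = -1 ∧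
      (Finset.univ.filter (fun i : Fin (2 * k) => Sum.inl i ∈ B₂)).card = k ∧
      (∏ i ∈ Finset.univ.filter (fun i : Fin (2 * k) => Sum.inl i ∈ B₂), a i = m) := by
  have hm0 : 0 < m := Nat.pos_of_ne_zero fun hm0 => (prod_pos fun i (_ : i ∈ univ) => ha i).ne'
    (by simp [hm, hm0])
  have hc := coefficient_pos ha hm0
  have hcoeff (n : ℤ) : ∑ B ∈ π.parts with blockExponent (degree k) d B = n,
      (ε B : ℚ) * blockCoeff (coefficient a m) d B =
        (if n = 3 * k then 1 else 0) - (if n = k then 1 else 0) := by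
    rw [sum_filter_blockExponent_eq_coeff (coe_eq_single_degree hv1 hv2 hv3) h,
      RatFunc.coeff_X_pow_sub_X_pow]
    push_cast
    rfl
  obtain ⟨B₁, B₂, hne, hparts, hR₁, hd₁, ht₁, hw₁, hR₂, hd₂, ht₂, hw₂⟩ :=
    exists_parts_eq_pair hk hd (fun B hB => mul_ne_zero (by rcases hε B hB with h | h <;> simp [h])
      (blockCoeff_pos hc d B).ne') hcoeff
  obtain ⟨hε₁, hc₁⟩ := sign_eq_and_eq_one_of_mul_eq (hε B₁ (hparts ▸ mem_insert_self B₁ {B₂}))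
    (.inl rfl) (blockCoeff_pos hc d B₁) (by exact_mod_cast hw₁)
  obtain ⟨hε₂, hc₂⟩ := sign_eq_and_eq_one_of_mul_eq
    (hε B₂ (hparts ▸ mem_insert_of_mem (mem_singleton_self B₂)))
    (.inr rfl) (blockCoeff_pos hc d B₂) (by exact_mod_cast hw₂)
  simp only [filter_inl_mem_eq_toLeft]
  exact ⟨B₁, B₂, hne, hparts, mem_toRight.1 (hR₁ ▸ mem_singleton_self 0), hd₁, hε₁, ht₁,
    (blockCoeff_coefficient_eq_one_iff ha hR₁ hd₁).1 hc₁,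
    mem_toRight.1 (hR₂ ▸ mem_singleton_self 1), hd₂, hε₂, ht₂, (blockCoeff_coefficient_eq_one_iff ha hR₂ hd₂).1 hc₂⟩

theorem stmt_15 (k : ℕ) (hk : 1 ≤ k) (a : Fin (2 * k) → ℕ) (ha : ∀ i, 0 < a i)
    (m : ℕ) (hm : ∏ i, a i = m ^ 2)
    (v : Fin (2 * k) ⊕ Fin 2 → RatFunc ℚ)
    (hv1 : ∀ i, v (Sum.inl i) = (a i : RatFunc ℚ) * RatFunc.X)
    (hv2 : v (Sum.inr 0) = (m : RatFunc ℚ) * RatFunc.X ^ (4 * k))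
    (hv3 : v (Sum.inr 1) = (m : RatFunc ℚ) * RatFunc.X ^ (2 * k))
    (π : Finpartition (Finset.univ : Finset (Fin (2 * k) ⊕ Fin 2)))
    (d : Finset (Fin (2 * k) ⊕ Fin 2) → Fin (2 * k) ⊕ Fin 2)
    (hd : ∀ B ∈ π.parts, d B ∈ B)
    (ε : Finset (Fin (2 * k) ⊕ Fin 2) → ℤ)
    (hε : ∀ B ∈ π.parts, ε B = 1 ∨ ε B = -1)
    (hε1 : ∃ B₀ ∈ π.parts, ε B₀ = 1)
    (h : ∑ B ∈ π.parts, (ε B : RatFunc ℚ) * (v (d B) / ∏ j ∈ B.erase (d B), v j)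
      = RatFunc.X ^ (3 * k) - RatFunc.X ^ k) :
    ∃ B₁ B₂ : Finset (Fin (2 * k) ⊕ Fin 2), B₁ ≠ B₂ ∧ π.parts = {B₁, B₂} ∧
      Sum.inr 0 ∈ B₁ ∧ d B₁ = Sum.inr 0 ∧ ε B₁ = 1 ∧
      (Finset.univ.filter (fun i : Fin (2 * k) => Sum.inl i ∈ B₁)).card = k ∧
      (∏ i ∈ Finset.univ.filter (fun i : Fin (2 * k) => Sum.inl i ∈ B₁), a i = m) ∧
      Sum.inr 1 ∈ B₂ ∧ d B₂ = Sum.inr 1 ∧ ε B₂ = -1 ∧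
      (Finset.univ.filter (fun i : Fin (2 * k) => Sum.inl i ∈ B₂)).card = k ∧
      (∏ i ∈ Finset.univ.filter (fun i : Fin (2 * k) => Sum.inl i ∈ B₂), a i = m) :=
  stmt_15_general k hk a ha m hm v hv1 hv2 hv3 π d hd ε hε h
end
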